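/- (One-categorical Barr–Beck triangle theorem.) Let C, C', D be categories, and let U: C → C', G: C → D, G': C' → D be functors together with a natural isomorphism G ≅ U ⋙ G'. Assume: (1) G admits a left adjoint F and G' admits a left adjoint F'; (2) C admits coequalizers of reflexive pairs and G preserves them; (3) C' admits coequalizers of reflexive pairs and G' preserves them; (4) G and G' are conservative (reflect isomorphisms); (5) for every object d of D, the canonical map G'F'(d) → G'(U(F(d))) ≅ G(F(d)) — namely G' applied to the morphism F'(d) → U(F(d)) adjoint (under F' ⊣ G') to the unit d → G(F(d)) ≅ G'(U(F(d))) — is an isomorphism. Then U is an equivalence of categories. -/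

import Mathlib

/-!
The adjoint triangle theorem (`isRightAdjoint_triangle_lift`) gives `U` a left adjoint `L`: `C` has
reflexive coequalizers, and each counit `F'G'c' ⟶ c'` is the coequalizer of the reflexive pair
`F'G'F'G'c' ⇉ F'G'c'`, since `G'` sends it to a split coequalizer and reflects reflexive coequalizers.
Transposing along `F' ⊣ G'` and `L ⊣ U` writes the comparison map `F'd ⟶ UFd` as the unit
`F'd ⟶ ULF'd` followed by an isomorphism, so by conservativity of `G'` the unit is invertible on
the free objects `F'd`. As `G ≅ U ⋙ G'` preserves reflexive coequalizers and `G'` reflects them,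
`U`, hence `UL`, preserves them, and the unit at `c'` is the map induced on the coequalizers of the
free resolution of `c'`: it is invertible. The triangle identity then makes `U` invert the counit,
and `U` is conservative because `G` is.
-/

open CategoryTheory Limits

universe v₁ v₂ v₃ u₁ u₂ u₃

section ReflexiveCoequalizers

variable {C : Type u₁} {D : Type u₂} [Category.{v₁} C] [Category.{v₂} D]

-- Mathlib's `Monad.PreservesColimitOfIsReflexivePair` requires `C` and `D` to share a hom universe.
class PreservesReflexiveCoequalizers (G : C ⥤ D) : Prop where
  preservesColimit ⦃X Y : C⦄ (f g : X ⟶ Y) [IsReflexivePair f g] :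
    PreservesColimit (parallelPair f g) G

attribute [instance] PreservesReflexiveCoequalizers.preservesColimit

instance CategoryTheory.IsReflexivePair.map {X Y : C} (f g : X ⟶ Y) [IsReflexivePair f g]
    (H : C ⥤ D) : IsReflexivePair (H.map f) (H.map g) :=
  IsReflexivePair.mk' (H.map (commonSection f g))
    (by rw [← H.map_comp, section_comp_left, H.map_id])
    (by rw [← H.map_comp, section_comp_right, H.map_id])

def parallelPairCompIso (H : C ⥤ D) {X Y : C} (f g : X ⟶ Y) :
    parallelPair f g ⋙ H ≅ parallelPair (H.map f) (H.map g) :=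
  diagramIsoParallelPair _

lemma hasColimit_parallelPair_comp [HasReflexiveCoequalizers D] (H : C ⥤ D) {X Y : C}
    (f g : X ⟶ Y) [IsReflexivePair f g] : HasColimit (parallelPair f g ⋙ H) :=
  hasColimit_of_iso (parallelPairCompIso H f g)

lemma preservesColimit_parallelPair_comp {E : Type u₃} [Category.{v₃} E] (G : D ⥤ E)
    [PreservesReflexiveCoequalizers G] (H : C ⥤ D) {X Y : C} (f g : X ⟶ Y)
    [IsReflexivePair f g] : PreservesColimit (parallelPair f g ⋙ H) G :=
  preservesColimit_of_iso_diagram G (parallelPairCompIso H f g).symm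

lemma hasReflexiveCoequalizers_of_exists_isColimit
    (h : ∀ {X Y : C} (f g : X ⟶ Y), IsReflexivePair f g →
      ∃ c : Cofork f g, Nonempty (IsColimit c)) :
    HasReflexiveCoequalizers C where
  has_coeq _ _ f g hfg :=
    have ⟨c, ⟨hc⟩⟩ := h f g hfg
    ⟨⟨⟨c, hc⟩⟩⟩

lemma preservesReflexiveCoequalizers_of_isColimit_mapCocone (G : C ⥤ D)
    (h : ∀ {X Y : C} (f g : X ⟶ Y), IsReflexivePair f g →
      ∀ c : Cofork f g, IsColimit c → Nonempty (IsColimit (G.mapCocone c))) :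
    PreservesReflexiveCoequalizers G where
  preservesColimit _ _ f g hfg := ⟨fun hc => h f g hfg _ hc⟩

lemma preservesReflexiveCoequalizers_of_comp {E : Type u₃} [Category.{v₃} E] (U : C ⥤ D)
    (G : D ⥤ E) [HasReflexiveCoequalizers D] [G.ReflectsIsomorphisms]
    [PreservesReflexiveCoequalizers G] [PreservesReflexiveCoequalizers (U ⋙ G)] :
    PreservesReflexiveCoequalizers U where
  preservesColimit _ _ f g _ :=
    have := hasColimit_parallelPair_comp U f g
    have := preservesColimit_parallelPair_comp G U f g
    have := reflectsColimit_of_reflectsIsomorphisms (parallelPair f g ⋙ U) G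
    preservesColimit_of_reflects_of_preserves U G

noncomputable def isColimitCounitCofork {F : D ⥤ C} {G : C ⥤ D} (adj : F ⊣ G)
    [HasReflexiveCoequalizers C] [G.ReflectsIsomorphisms] [PreservesReflexiveCoequalizers G]
    (c : C) :
    IsColimit (Cofork.ofπ (adj.counit.app c) (adj.counit_naturality _) :
      Cofork (F.map (G.map (adj.counit.app c))) (adj.counit.app (F.obj (G.obj c)))) :=
  have := reflectsColimit_of_reflectsIsomorphisms
    (parallelPair (F.map (G.map (adj.counit.app c))) (adj.counit.app (F.obj (G.obj c)))) G
  isColimitOfIsColimitCoforkMap G _ (Monad.beckCoequalizer ((Monad.comparison adj).obj c))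

end ReflexiveCoequalizers

lemma isIso_app_of_isColimit {J : Type*} {C : Type u₁} {E : Type u₂} [Category J]
    [Category.{v₁} C] [Category.{v₂} E] {K : J ⥤ C} {P Q : C ⥤ E} (α : P ⟶ Q) {c : Cocone K}
    (hP : IsColimit (P.mapCocone c)) (hQ : IsColimit (Q.mapCocone c))
    [∀ j, IsIso (α.app (K.obj j))] : IsIso (α.app c.pt) := by
  have : IsIso (K.whiskerLeft α) :=
    (NatTrans.isIso_iff_isIso_app _).2 fun j => (inferInstance : IsIso (α.app (K.obj j)))
  have hα : α.app c.pt = hP.map (Q.mapCocone c) (K.whiskerLeft α) :=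
    hP.hom_ext fun j => by
      rw [IsColimit.ι_map]
      exact α.naturality (c.ι.app j)
  rw [hα]
  exact (hP.coconePointsIsoOfNatIso hQ (asIso (K.whiskerLeft α))).isIso_hom

section Triangle

variable {C : Type u₁} {C' : Type u₂} {D : Type u₃} [Category.{v₁} C] [Category.{v₂} C']
  [Category.{v₃} D] {U : C ⥤ C'} {G : C ⥤ D} {G' : C' ⥤ D} {F : D ⥤ C} {F' : D ⥤ C'}
  {L : C' ⥤ C}

lemma isIso_counit_app_of_isIso_unit_app [U.ReflectsIsomorphisms] (adjL : L ⊣ U)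
    (h : ∀ c', IsIso (adjL.unit.app c')) (c : C) : IsIso (adjL.counit.app c) := by
  have : IsIso (U.map (adjL.counit.app c)) := by
    rw [IsIso.eq_inv_of_hom_inv_id (adjL.right_triangle_components c)]
    infer_instance
  exact isIso_of_reflects_iso _ U

lemma isIso_unit_app_of_isIso_unit_app_obj (adj' : F' ⊣ G') (adjL : L ⊣ U)
    [HasReflexiveCoequalizers C'] [G'.ReflectsIsomorphisms]
    [PreservesReflexiveCoequalizers G'] [PreservesReflexiveCoequalizers U]
    (h : ∀ d, IsIso (adjL.unit.app (F'.obj d))) (c' : C') : IsIso (adjL.unit.app c') := by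
  have hc := isColimitCounitCofork adj' c'
  have : PreservesColimitsOfSize.{0, 0} L := adjL.leftAdjoint_preservesColimits
  have := preservesColimit_parallelPair_comp U L
    (F'.map (G'.map (adj'.counit.app c'))) (adj'.counit.app (F'.obj (G'.obj c')))
  have : ∀ j, IsIso (adjL.unit.app ((parallelPair (F'.map (G'.map (adj'.counit.app c')))
      (adj'.counit.app (F'.obj (G'.obj c')))).obj j)) := by
    rintro (_ | _) <;> exact h _
  exact isIso_app_of_isColimit adjL.unit (isColimitOfPreserves (𝟭 C') hc)
    (isColimitOfPreserves (L ⋙ U) hc)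

variable (adj : F ⊣ G) (adj' : F' ⊣ G') (iso : G ≅ U ⋙ G')

lemma isIso_unit_app_obj_of_isIso_comparison [G'.ReflectsIsomorphisms] (adjL : L ⊣ U) (d : D)
    (h : IsIso (G'.map ((adj'.homEquiv d (U.obj (F.obj d))).symm
      (adj.unit.app d ≫ iso.hom.app (F.obj d))))) :
    IsIso (adjL.unit.app (F'.obj d)) := by
  set θ := (adj'.comp adjL).leftAdjointUniq (adj.ofNatIsoRight iso)
  have hσ : (adj'.homEquiv d (U.obj (F.obj d))).symm (adj.unit.app d ≫ iso.hom.app (F.obj d)) =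
      adjL.unit.app (F'.obj d) ≫ U.map (θ.hom.app d) := by
    have := Adjunction.unit_leftAdjointUniq_hom_app (adj'.comp adjL) (adj.ofNatIsoRight iso) d
    rw [Adjunction.comp_unit_app] at this
    rw [Equiv.symm_apply_eq, Adjunction.homEquiv_unit, G'.map_comp, ← Category.assoc]
    exact this.symm
  rw [hσ, isIso_iff_of_reflects_iso] at h
  exact IsIso.of_isIso_comp_right _ (U.map (θ.hom.app d))

theorem isEquivalence_of_isIso_comparison [HasReflexiveCoequalizers C]
    [HasReflexiveCoequalizers C'] [G.ReflectsIsomorphisms] [G'.ReflectsIsomorphisms]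
    [PreservesReflexiveCoequalizers G] [PreservesReflexiveCoequalizers G']
    (h : ∀ d, IsIso (G'.map ((adj'.homEquiv d (U.obj (F.obj d))).symm
      (adj.unit.app d ≫ iso.hom.app (F.obj d))))) :
    U.IsEquivalence := by
  have : PreservesReflexiveCoequalizers (U ⋙ G') :=
    ⟨fun _ _ _ _ _ => preservesColimit_of_natIso _ iso⟩
  have := preservesReflexiveCoequalizers_of_comp U G'
  have : (U ⋙ G').ReflectsIsomorphisms := reflectsIsomorphisms_of_iso iso
  have := reflectsIsomorphisms_of_comp U G'
  have : (U ⋙ G').IsRightAdjoint := (adj.ofNatIsoRight iso).isRightAdjoint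
  have : U.IsRightAdjoint :=
    isRightAdjoint_triangle_lift U adj' fun c' => ⟨_, _, _, _, isColimitCounitCofork adj' c'⟩
  let adjL := Adjunction.ofIsRightAdjoint U
  have hfree d := isIso_unit_app_obj_of_isIso_comparison adj adj' iso adjL d (h d)
  have := isIso_unit_app_of_isIso_unit_app_obj adj' adjL hfree
  have := isIso_counit_app_of_isIso_unit_app adjL this
  exact U.isEquivalence_of_isRightAdjoint

end Triangle

/-- STATEMENT 9 (one-categorical Barr–Beck triangle theorem): given functors
`U : C ⥤ C'`, `G : C ⥤ D`, `G' : C' ⥤ D` with `G ≅ U ⋙ G'`, such that `G, G'`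
have left adjoints `F, F'`, the categories `C` and `C'` have coequalizers of
reflexive pairs preserved by `G` resp. `G'`, `G` and `G'` are conservative, and
for each `d : D` the canonical comparison map `G'F'(d) → G'(UF(d)) ≅ G(F(d))`
(obtained by transposing the unit `d → GF(d)` across `F' ⊣ G'` and applying
`G'`) is an isomorphism — then `U` is an equivalence of categories. -/
theorem barr_beck_triangle
    {C : Type*} {C' : Type*} {D : Type*}
    [Category C] [Category C'] [Category D]
    (U : C ⥤ C') (G : C ⥤ D) (G' : C' ⥤ D) (iso : G ≅ U ⋙ G')
    (F : D ⥤ C) (adj : F ⊣ G) (F' : D ⥤ C') (adj' : F' ⊣ G')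
    (hC : ∀ {X Y : C} (f g : X ⟶ Y), IsReflexivePair f g →
      ∃ c : Cofork f g, Nonempty (IsColimit c))
    (hG : ∀ {X Y : C} (f g : X ⟶ Y), IsReflexivePair f g →
      ∀ c : Cofork f g, IsColimit c → Nonempty (IsColimit (G.mapCocone c)))
    (hC' : ∀ {X Y : C'} (f g : X ⟶ Y), IsReflexivePair f g →
      ∃ c : Cofork f g, Nonempty (IsColimit c))
    (hG' : ∀ {X Y : C'} (f g : X ⟶ Y), IsReflexivePair f g →
      ∀ c : Cofork f g, IsColimit c → Nonempty (IsColimit (G'.mapCocone c)))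
    (hGcons : ∀ {X Y : C} (f : X ⟶ Y), IsIso (G.map f) → IsIso f)
    (hG'cons : ∀ {X Y : C'} (f : X ⟶ Y), IsIso (G'.map f) → IsIso f)
    (hcomp : ∀ d : D, IsIso (G'.map
      ((adj'.homEquiv d (U.obj (F.obj d))).symm
        (adj.unit.app d ≫ iso.hom.app (F.obj d))))) :
    U.IsEquivalence := by
  have := hasReflexiveCoequalizers_of_exists_isColimit hC
  have := hasReflexiveCoequalizers_of_exists_isColimit hC'
  have := preservesReflexiveCoequalizers_of_isColimit_mapCocone G hG
  have := preservesReflexiveCoequalizers_of_isColimit_mapCocone G' hG'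
  have : G.ReflectsIsomorphisms := ⟨fun f _ => hGcons f ‹_›⟩
  have : G'.ReflectsIsomorphisms := ⟨fun f _ => hG'cons f ‹_›⟩
  exact isEquivalence_of_isIso_comparison adj adj' iso hcomp
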